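/- Fix a matrix C ∈ ℝ^{ℓ×d} with ‖X_j Cᵀ C‖ ≤ 2 for all j ∈ [n], fix v ∈ {−1,+1}^m, labels y ∈ ℝ^n, learning rate η > 0, λ₀ > 0, and an initialization B(0) ∈ ℝ^{m×ℓ}. Suppose the gradient-descent iterates B(0), B(1), …, B(t+1) satisfy the induction hypothesis ‖u(t') − y‖² ≤ (1 − ηλ₀/2)^{t'}·‖u(0) − y‖² for all t' ≤ t, where 0 < ηλ₀/2 < 1. Then for every r ∈ [m], writing W_r(s) := B_r(s)C, one has ‖W_r(t+1) − W_r(0)‖ ≤ C₀·√n·‖u(0) − y‖ / (√m·λ₀) for an absolute constant C₀ > 0. -/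

import Mathlib

open MeasureTheory ProbabilityTheory Real
open scoped NNReal

noncomputable section

/-- Real-valued indicator of a proposition. -/
def ind (P : Prop) : ℝ := @ite _ P (Classical.dec P) 1 0

/-- Dot product of two real vectors. -/
def dot {p : ℕ} (x y : Fin p → ℝ) : ℝ := ∑ i, x i * y i

/-- Matrix-vector product. -/
def mvec {a b : ℕ} (M : Fin a → Fin b → ℝ) (x : Fin b → ℝ) : Fin a → ℝ := fun i => dot (M i) x

/-- Vector-matrix product. -/
def vmul {a b : ℕ} (x : Fin a → ℝ) (M : Fin a → Fin b → ℝ) : Fin b → ℝ :=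
  fun j => ∑ i, x i * M i j

/-- Euclidean norm of a real vector. -/
def eunorm {p : ℕ} (x : Fin p → ℝ) : ℝ := Real.sqrt (∑ i, x i ^ 2)

/-- ℓ²→ℓ² operator (spectral) norm of a matrix. -/
def specNorm {a b : ℕ} (M : Fin a → Fin b → ℝ) : ℝ :=
  sSup {c : ℝ | ∃ x : Fin b → ℝ, ∑ j, x j ^ 2 ≤ 1 ∧ c = eunorm (mvec M x)}

/-- Smallest eigenvalue of a (symmetric) matrix, as the infimum of the quadratic form
over the unit sphere. -/
def lamMin {n : ℕ} (M : Fin n → Fin n → ℝ) : ℝ :=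
  sInf {c : ℝ | ∃ x : Fin n → ℝ, ∑ i, x i ^ 2 = 1 ∧ c = dot x (mvec M x)}

/-- Standard Gaussian measure on ℝ^b. -/
def stdGaussian (b : ℕ) : Measure (Fin b → ℝ) := Measure.pi fun _ => gaussianReal 0 1

/-- Measure on a×b real matrices with i.i.d. centered Gaussian entries of variance `v`. -/
def gaussMatrix (a b : ℕ) (v : ℝ≥0) : Measure (Fin a → Fin b → ℝ) :=
  Measure.pi fun _ => Measure.pi fun _ => gaussianReal 0 v

/-- Uniform measure on {-1, 1} ⊆ ℝ. -/
def signMeasure : Measure ℝ :=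
  (PMF.uniformOfFinset ({-1, 1} : Finset ℝ) ⟨-1, by simp⟩).toMeasure

instance : IsProbabilityMeasure signMeasure := by
  unfold signMeasure; infer_instance

/-- Uniform measure on {-1,1}^m. -/
def signVec (m : ℕ) : Measure (Fin m → ℝ) := Measure.pi fun _ => signMeasure

instance (b : ℕ) : IsProbabilityMeasure (stdGaussian b) := by
  unfold _root_.stdGaussian; infer_instance

instance (a b : ℕ) (v : ℝ≥0) : IsProbabilityMeasure (gaussMatrix a b v) := by
  unfold gaussMatrix; infer_instance

instance (m : ℕ) : IsProbabilityMeasure (signVec m) := by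
  unfold signVec; infer_instance

/-- Output of the plain two-layer ReLU network. -/
def netPlain {n d m : ℕ} (X : Fin n → Fin d → ℝ) (v : Fin m → ℝ)
    (W : Fin m → Fin d → ℝ) (i : Fin n) : ℝ :=
  (Real.sqrt m)⁻¹ * ∑ r, v r * max 0 (dot (W r) (X i))

/-- Gradient of Φ(W) = ½‖y-u‖² w.r.t. the r-th row of W (plain network). -/
def gradPlain {n d m : ℕ} (X : Fin n → Fin d → ℝ) (v : Fin m → ℝ) (y : Fin n → ℝ)
    (W : Fin m → Fin d → ℝ) (r : Fin m) : Fin d → ℝ :=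
  fun q => -(Real.sqrt m)⁻¹ *
    ∑ j, (y j - netPlain X v W j) * v r * ind (0 ≤ dot (W r) (X j)) * X j q

/-- NTK matrix of the plain network. -/
def HinfPlain {n d : ℕ} (X : Fin n → Fin d → ℝ) (i j : Fin n) : ℝ :=
  ∫ w, dot (X i) (X j) * ind (0 ≤ dot w (X i)) * ind (0 ≤ dot w (X j)) ∂ stdGaussian d

/-- `X_i Cᵀ C X_jᵀ`. -/
def dotC {n d ℓ : ℕ} (X : Fin n → Fin d → ℝ) (C : Fin ℓ → Fin d → ℝ) (i j : Fin n) : ℝ :=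
  dot (mvec C (X i)) (mvec C (X j))

/-- Output of the input-dimension-reduced two-layer ReLU network. -/
def netFac {n d ℓ m : ℕ} (X : Fin n → Fin d → ℝ) (C : Fin ℓ → Fin d → ℝ)
    (v : Fin m → ℝ) (B : Fin m → Fin ℓ → ℝ) (i : Fin n) : ℝ :=
  (Real.sqrt m)⁻¹ * ∑ r, v r * max 0 (dot (B r) (mvec C (X i)))

/-- Gradient of Φ(B) = ½‖y-u‖² w.r.t. the r-th row of B (input-dimension-reduced network). -/
def gradFac {n d ℓ m : ℕ} (X : Fin n → Fin d → ℝ) (C : Fin ℓ → Fin d → ℝ)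
    (v : Fin m → ℝ) (y : Fin n → ℝ) (B : Fin m → Fin ℓ → ℝ) (r : Fin m) : Fin ℓ → ℝ :=
  fun q => -(Real.sqrt m)⁻¹ *
    ∑ j, (y j - netFac X C v B j) * v r * ind (0 ≤ dot (B r) (mvec C (X j))) * mvec C (X j) q

/-- NTK matrix of the input-dimension-reduced network. -/
def HinfFac {n d ℓ : ℕ} (X : Fin n → Fin d → ℝ) (C : Fin ℓ → Fin d → ℝ) (i j : Fin n) : ℝ :=
  ∫ b, dotC X C i j * ind (0 ≤ dot b (mvec C (X i))) * ind (0 ≤ dot b (mvec C (X j)))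
    ∂ stdGaussian ℓ

/-- Empirical NTK matrix of the input-dimension-reduced network at weights B. -/
def HFac {n d ℓ m : ℕ} (X : Fin n → Fin d → ℝ) (C : Fin ℓ → Fin d → ℝ)
    (B : Fin m → Fin ℓ → ℝ) (i j : Fin n) : ℝ :=
  (m : ℝ)⁻¹ * ∑ r, dotC X C i j * ind (0 ≤ dot (B r) (mvec C (X i))) *
    ind (0 ≤ dot (B r) (mvec C (X j)))

/-- Output of the width-reduced two-layer ReLU network (W = A·B·C). -/
def netWidth {n d ℓ k m : ℕ} (X : Fin n → Fin d → ℝ) (C : Fin ℓ → Fin d → ℝ)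
    (A : Fin m → Fin k → ℝ) (v : Fin m → ℝ) (B : Fin k → Fin ℓ → ℝ) (i : Fin n) : ℝ :=
  (Real.sqrt m)⁻¹ * ∑ r, v r * max 0 (dot (A r) (mvec B (mvec C (X i))))

/-- The sign-indicator vector Z_i(B) of the width-reduced network. -/
def Zvec {n d ℓ k m : ℕ} (X : Fin n → Fin d → ℝ) (C : Fin ℓ → Fin d → ℝ)
    (A : Fin m → Fin k → ℝ) (v : Fin m → ℝ) (B : Fin k → Fin ℓ → ℝ) (i : Fin n) :
    Fin m → ℝ :=
  fun r => v r * ind (0 ≤ dot (A r) (mvec B (mvec C (X i))))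

/-- Gradient of Φ(B) = ½‖y-u‖² w.r.t. B (width-reduced network). -/
def gradWidth {n d ℓ k m : ℕ} (X : Fin n → Fin d → ℝ) (C : Fin ℓ → Fin d → ℝ)
    (A : Fin m → Fin k → ℝ) (v : Fin m → ℝ) (y : Fin n → ℝ)
    (B : Fin k → Fin ℓ → ℝ) : Fin k → Fin ℓ → ℝ :=
  fun a b => -(Real.sqrt m)⁻¹ *
    ∑ j, (y j - netWidth X C A v B j) * vmul (Zvec X C A v B j) A a * mvec C (X j) b

/-- Empirical NTK matrix of the width-reduced network at weights B. -/
def HWidth {n d ℓ k m : ℕ} (X : Fin n → Fin d → ℝ) (C : Fin ℓ → Fin d → ℝ)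
    (A : Fin m → Fin k → ℝ) (v : Fin m → ℝ) (B : Fin k → Fin ℓ → ℝ) (i j : Fin n) : ℝ :=
  (m : ℝ)⁻¹ * dotC X C i j * dot (vmul (Zvec X C A v B i) A) (vmul (Zvec X C A v B j) A)

/-- NTK matrix of the width-reduced network. -/
def HinfWidth {n d ℓ k m : ℕ} (X : Fin n → Fin d → ℝ) (C : Fin ℓ → Fin d → ℝ)
    (A : Fin m → Fin k → ℝ) (v : Fin m → ℝ) (i j : Fin n) : ℝ :=
  ∫ B, HWidth X C A v B i j ∂ gaussMatrix k ℓ 1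

/-!
A gradient step moves `W_r = B_r C` by a combination of the vectors `X_j Cᵀ C` (each of norm
at most 2) with coefficients bounded by `η |u_j - y_j| / √m`; by the triangle and
Cauchy–Schwarz inequalities the step has length at most `2η √n / √m · ‖u(s) - y‖`. The
hypothesis makes `‖u(s) - y‖` decay geometrically with ratio `√(1 - ηλ₀/2) ≤ 1 - ηλ₀/4`, so
the total displacement is bounded by a geometric series, giving `C₀ = 8`.
-/

open Finset

lemma eunorm_eq_norm_toLp {p : ℕ} (x : Fin p → ℝ) :
    eunorm x = ‖(WithLp.toLp 2 x : EuclideanSpace ℝ (Fin p))‖ := by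
  simp [eunorm, EuclideanSpace.norm_eq]

lemma eunorm_sub_eq_dist {p : ℕ} (x z : Fin p → ℝ) :
    eunorm (fun q => x q - z q) =
      dist (WithLp.toLp 2 x : EuclideanSpace ℝ (Fin p)) (WithLp.toLp 2 z) := by
  rw [dist_eq_norm, ← WithLp.toLp_sub, ← eunorm_eq_norm_toLp]
  rfl

lemma eunorm_mul (c : ℝ) {p : ℕ} (x : Fin p → ℝ) : eunorm (fun q => c * x q) = |c| * eunorm x := by
  simp only [eunorm, mul_pow, ← mul_sum]
  rw [Real.sqrt_mul (sq_nonneg c), Real.sqrt_sq_eq_abs]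

lemma eunorm_sum_mul_le {ι : Type*} {p : ℕ} (s : Finset ι) (c : ι → ℝ) (w : ι → Fin p → ℝ) :
    eunorm (fun q => ∑ j ∈ s, c j * w j q) ≤ ∑ j ∈ s, |c j| * eunorm (w j) := by
  have h : (WithLp.toLp 2 fun q => ∑ j ∈ s, c j * w j q : EuclideanSpace ℝ (Fin p)) =
      ∑ j ∈ s, c j • WithLp.toLp 2 (w j) := by
    ext q; simp
  simpa [eunorm_eq_norm_toLp, h, norm_smul] using norm_sum_le s fun j => c j • WithLp.toLp 2 (w j)

lemma sum_abs_le_sqrt_mul_eunorm {n : ℕ} (a : Fin n → ℝ) : ∑ j, |a j| ≤ √n * eunorm a := by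
  simpa [eunorm] using Real.sum_mul_le_sqrt_mul_sqrt univ (fun _ => (1 : ℝ)) (fun j => |a j|)

lemma eunorm_le_sqrt_pow_mul_of_sum_sq_le {p s : ℕ} {ρ : ℝ} (hρ : 0 ≤ ρ) {x z : Fin p → ℝ}
    (h : ∑ i, x i ^ 2 ≤ ρ ^ s * ∑ i, z i ^ 2) : eunorm x ≤ √ρ ^ s * eunorm z := by
  rw [eunorm, eunorm, Real.sqrt_le_left (by positivity), mul_pow, ← pow_mul, mul_comm s, pow_mul,
    Real.sq_sqrt hρ, Real.sq_sqrt (by positivity)]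
  exact h

lemma dist_le_div_of_dist_succ_le_geometric {α : Type*} [PseudoMetricSpace α] {w : ℕ → α}
    {K ρ : ℝ} (hρ₀ : 0 ≤ ρ) (hρ₁ : ρ < 1) {t : ℕ}
    (h : ∀ s ≤ t, dist (w s) (w (s + 1)) ≤ K * ρ ^ s) :
    dist (w 0) (w (t + 1)) ≤ K / (1 - ρ) := by
  have hK : 0 ≤ K := by simpa using dist_nonneg.trans (h 0 t.zero_le)
  calc dist (w 0) (w (t + 1)) ≤ ∑ s ∈ range (t + 1), K * ρ ^ s :=
        dist_le_range_sum_of_dist_le _ fun hs => h _ (Nat.lt_succ_iff.mp hs)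
    _ = K * ∑ s ∈ Ico 0 (t + 1), ρ ^ s := by rw [← mul_sum, range_eq_Ico]
    _ ≤ K * (ρ ^ 0 / (1 - ρ)) := by gcongr; exact geom_sum_Ico_le_of_lt_one hρ₀ hρ₁
    _ = K / (1 - ρ) := by ring

lemma vmul_sub_mul_sub {a b : ℕ} (x g : Fin a → ℝ) (M : Fin a → Fin b → ℝ) (η : ℝ) (q : Fin b) :
    vmul (fun i => x i - η * g i) M q - vmul x M q = -η * vmul g M q := by
  simp only [vmul, sub_mul, sum_sub_distrib, neg_mul, mul_sum, mul_assoc, sub_sub_cancel_left,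
    sum_neg_distrib]

lemma abs_ind_le_one (P : Prop) : |ind P| ≤ 1 := by
  unfold ind; split <;> norm_num

lemma vmul_gradFac {n d ℓ m : ℕ} (X : Fin n → Fin d → ℝ) (C : Fin ℓ → Fin d → ℝ)
    (v : Fin m → ℝ) (y : Fin n → ℝ) (B : Fin m → Fin ℓ → ℝ) (r : Fin m) :
    vmul (gradFac X C v y B r) C = fun q => ∑ j, -(√m)⁻¹ *
      ((y j - netFac X C v B j) * v r * ind (0 ≤ dot (B r) (mvec C (X j)))) *
        vmul (mvec C (X j)) C q := by
  funext q
  simp only [vmul, gradFac, mul_sum, sum_mul]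
  rw [sum_comm]
  simp only [mul_assoc]

lemma eunorm_vmul_gradFac_le {n d ℓ m : ℕ} (X : Fin n → Fin d → ℝ) (C : Fin ℓ → Fin d → ℝ)
    (v : Fin m → ℝ) (y : Fin n → ℝ) (B : Fin m → Fin ℓ → ℝ) (r : Fin m) {K : ℝ} (hK : 0 ≤ K)
    (hv : |v r| ≤ 1) (hC : ∀ j, eunorm (vmul (mvec C (X j)) C) ≤ K) :
    eunorm (vmul (gradFac X C v y B r) C) ≤
      K * √n / √m * eunorm (fun i => netFac X C v B i - y i) := by
  set res := fun i => netFac X C v B i - y i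
  have hcoef : ∀ j, |-(√m)⁻¹ * ((y j - netFac X C v B j) * v r *
      ind (0 ≤ dot (B r) (mvec C (X j))))| ≤ (√m)⁻¹ * |res j| := by
    intro j
    rw [abs_mul, abs_neg, abs_inv, abs_of_nonneg (Real.sqrt_nonneg _), abs_mul, abs_mul,
      abs_sub_comm]
    gcongr
    rw [mul_assoc]
    exact mul_le_of_le_one_right (abs_nonneg _)
      (mul_le_one₀ hv (abs_nonneg _) (abs_ind_le_one _))
  calc eunorm (vmul (gradFac X C v y B r) C)
      ≤ ∑ j, |-(√m)⁻¹ * ((y j - netFac X C v B j) * v r *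
          ind (0 ≤ dot (B r) (mvec C (X j))))| * eunorm (vmul (mvec C (X j)) C) := by
        rw [vmul_gradFac]; exact eunorm_sum_mul_le _ _ _
    _ ≤ ∑ j, (√m)⁻¹ * |res j| * K :=
        sum_le_sum fun j _ => mul_le_mul (hcoef j) (hC j) (Real.sqrt_nonneg _) (by positivity)
    _ = K / √m * ∑ j, |res j| := by rw [mul_sum]; exact sum_congr rfl fun j _ => by ring
    _ ≤ K / √m * (√n * eunorm res) := by gcongr; exact sum_abs_le_sqrt_mul_eunorm res
    _ = K * √n / √m * eunorm res := by ring

lemma eunorm_vmul_gradFac_step_le {n d ℓ m : ℕ} (X : Fin n → Fin d → ℝ)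
    (C : Fin ℓ → Fin d → ℝ) (v : Fin m → ℝ) (y : Fin n → ℝ) {B B' : Fin m → Fin ℓ → ℝ}
    (r : Fin m) {η K : ℝ} (hη : 0 ≤ η) (hK : 0 ≤ K) (hv : |v r| ≤ 1)
    (hC : ∀ j, eunorm (vmul (mvec C (X j)) C) ≤ K)
    (hB' : B' r = fun q => B r q - η * gradFac X C v y B r q) :
    eunorm (fun q => vmul (B' r) C q - vmul (B r) C q) ≤
      η * (K * √n / √m) * eunorm (fun i => netFac X C v B i - y i) := by
  simp only [hB', vmul_sub_mul_sub]
  rw [eunorm_mul, abs_neg, abs_of_nonneg hη, mul_assoc]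
  gcongr
  exact eunorm_vmul_gradFac_le X C v y B r hK hv hC

theorem stmt6 :
    ∃ C₀ : ℝ, 0 < C₀ ∧
    ∀ (n d ℓ m : ℕ), 0 < m →
    ∀ X : Fin n → Fin d → ℝ, (∀ i, ∑ j, X i j ^ 2 = 1) →
    ∀ C : Fin ℓ → Fin d → ℝ, (∀ j, eunorm (vmul (mvec C (X j)) C) ≤ 2) →
    ∀ v : Fin m → ℝ, (∀ r, v r = 1 ∨ v r = -1) →
    ∀ y : Fin n → ℝ, ∀ η lam0 : ℝ, 0 < η → 0 < lam0 →
    0 < η * lam0 / 2 → η * lam0 / 2 < 1 →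
    ∀ B : ℕ → Fin m → Fin ℓ → ℝ, ∀ t : ℕ,
    (∀ s, s ≤ t → ∀ r, B (s + 1) r = fun q => B s r q - η * gradFac X C v y (B s) r q) →
    (∀ t' ≤ t, ∑ i, (netFac X C v (B t') i - y i) ^ 2 ≤
        (1 - η * lam0 / 2) ^ t' * ∑ i, (netFac X C v (B 0) i - y i) ^ 2) →
    ∀ r, eunorm (fun q => vmul (B (t + 1) r) C q - vmul (B 0 r) C q) ≤
      C₀ * Real.sqrt n * eunorm (fun i => netFac X C v (B 0) i - y i) /
        (Real.sqrt m * lam0) := by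
  refine ⟨8, by norm_num, ?_⟩
  intro n d ℓ m _ X _ C hC v hv y η lam0 hη hlam0 _ hrate B t hupd hloss r
  set ρ := 1 - η * lam0 / 2 with hρ_def
  set E₀ := eunorm (fun i => netFac X C v (B 0) i - y i)
  set W : ℕ → EuclideanSpace ℝ (Fin d) := fun s => WithLp.toLp 2 (vmul (B s r) C)
  have hρ : 0 ≤ ρ := by rw [hρ_def]; linarith
  have hstep : ∀ s ≤ t, dist (W s) (W (s + 1)) ≤ η * (2 * √n / √m) * E₀ * √ρ ^ s := by
    intro s hs
    have hv1 : |v r| ≤ 1 := by rcases hv r with h | h <;> simp [h]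
    calc dist (W s) (W (s + 1))
        = eunorm (fun q => vmul (B (s + 1) r) C q - vmul (B s r) C q) := by
          rw [dist_comm, eunorm_sub_eq_dist]
      _ ≤ η * (2 * √n / √m) * eunorm (fun i => netFac X C v (B s) i - y i) :=
          eunorm_vmul_gradFac_step_le X C v y r hη.le zero_le_two hv1 hC (hupd s hs r)
      _ ≤ η * (2 * √n / √m) * (√ρ ^ s * E₀) := by
          gcongr; exact eunorm_le_sqrt_pow_mul_of_sum_sq_le hρ (hloss s hs)
      _ = η * (2 * √n / √m) * E₀ * √ρ ^ s := by ring
  have hgap : η * lam0 / 4 ≤ 1 - √ρ := by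
    have := Real.sqrt_one_add_le (x := -(η * lam0 / 2)) (by linarith)
    rw [← sub_eq_add_neg] at this
    linarith
  calc eunorm (fun q => vmul (B (t + 1) r) C q - vmul (B 0 r) C q)
      = dist (W 0) (W (t + 1)) := by rw [eunorm_sub_eq_dist, dist_comm]
    _ ≤ η * (2 * √n / √m) * E₀ / (1 - √ρ) :=
        dist_le_div_of_dist_succ_le_geometric (Real.sqrt_nonneg _)
          (by linarith [mul_pos hη hlam0]) hstep
    _ ≤ η * (2 * √n / √m) * E₀ / (η * lam0 / 4) := by
        gcongr
        exact mul_nonneg (by positivity) (Real.sqrt_nonneg _)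
    _ = 8 * √n * E₀ / (√m * lam0) := by field_simp; ring
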